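/- arXiv:2306.12981 — 2 statements merged into one kernel-verified Lean document; each statement's English description precedes it below -/
import Mathlib

section
/- Let M = (S, A, P, R, γ) and M̂ = (S, A, P̂, R, γ) be finite discounted MDPs sharing the same state space, action space, rewards in [0,1], and discount; only the transition kernels P and P̂ may differ. Let π be any policy with ‖V_{M̂}^* − V_{M̂}^π‖_∞ ≤ ε_opt. Then ‖Q_{M̂}^π − Q_M^π‖_∞ ≤ γ·‖(I − γP^π)^{−1}(P̂ − P)V_{M̂}^*‖_∞ + γ·ε_opt/(1−γ), where P^π is the S×A-indexed matrix with entries P^π((s,a),(s',a')) = P(s'|s,a)·π(a'|s'), and (P̂ − P)V denotes the vector (s,a) ↦ Σ_{s'} (P̂(s'|s,a) − P(s'|s,a))·V(s'). -/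
open scoped BigOperators Classical

namespace MDPGroup

variable {S A G : Type*}

/-- `P` is a transition kernel: `P s a ·` is a probability distribution on states. -/
structure IsKernel [Fintype S] (P : S → A → S → ℝ) : Prop where
  nonneg : ∀ s a s', 0 ≤ P s a s'
  sum_one : ∀ s a, ∑ s', P s a s' = 1

/-- `π` is a stationary randomized policy. -/
structure IsPolicy [Fintype A] (π : S → A → ℝ) : Prop where
  nonneg : ∀ s a, 0 ≤ π s a
  sum_one : ∀ s, ∑ a, π s a = 1

/-- `Q` satisfies the Bellman equation for policy `π`. -/
def IsBellman [Fintype S] [Fintype A] (P : S → A → S → ℝ) (R : S → A → ℝ) (γ : ℝ)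
    (π : S → A → ℝ) (Q : S → A → ℝ) : Prop :=
  ∀ s a, Q s a = R s a + γ * ∑ s', P s a s' * ∑ a', π s' a' * Q s' a'

/-- The action-value function of policy `π` (the unique solution of the Bellman equation,
when it exists). -/
noncomputable def Qpi [Fintype S] [Fintype A] (P : S → A → S → ℝ) (R : S → A → ℝ)
    (γ : ℝ) (π : S → A → ℝ) : S → A → ℝ :=
  if h : ∃ Q : S → A → ℝ, IsBellman P R γ π Q then h.choose else 0

/-- The state-value function of policy `π`. -/
noncomputable def Vpi [Fintype S] [Fintype A] (P : S → A → S → ℝ) (R : S → A → ℝ)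
    (γ : ℝ) (π : S → A → ℝ) : S → ℝ :=
  fun s => ∑ a, π s a * Qpi P R γ π s a

/-- The optimal state-value function. -/
noncomputable def Vstar [Fintype S] [Fintype A] (P : S → A → S → ℝ) (R : S → A → ℝ)
    (γ : ℝ) : S → ℝ :=
  fun s => ⨆ π : {π : S → A → ℝ // IsPolicy π}, Vpi P R γ π.1 s

/-- The optimal action-value function. -/
noncomputable def Qstar [Fintype S] [Fintype A] (P : S → A → S → ℝ) (R : S → A → ℝ)
    (γ : ℝ) : S → A → ℝ :=
  fun s a => ⨆ π : {π : S → A → ℝ // IsPolicy π}, Qpi P R γ π.1 s a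

/-- Supremum norm of a function on a (finite) index type. -/
noncomputable def supNorm {ι : Type*} (f : ι → ℝ) : ℝ := ⨆ i, |f i|

/-- A lower-level policy, selecting an action within each group. -/
structure IsLower [Fintype A] (g : A → G) (πi : G → A → ℝ) : Prop where
  nonneg : ∀ h a, 0 ≤ πi h a
  sum_one : ∀ h, ∑ a, πi h a = 1
  support : ∀ h a, g a ≠ h → πi h a = 0

/-- The composed policy `π^o ∘ π^i`. -/
def compose (g : A → G) (πi : G → A → ℝ) (πo : S → G → ℝ) : S → A → ℝ :=
  fun s a => πo s (g a) * πi (g a) a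

/-- Grouped transition kernel. -/
noncomputable def PG [Fintype A] (P : S → A → S → ℝ) (πi : G → A → ℝ) : S → G → S → ℝ :=
  fun s h s' => ∑ a, πi h a * P s a s'

/-- Grouped reward. -/
noncomputable def RG [Fintype A] (R : S → A → ℝ) (πi : G → A → ℝ) : S → G → ℝ :=
  fun s h => ∑ a, πi h a * R s a

/-- The optimal transition deviation factor `β_P^*(g)`. -/
noncomputable def betaPstar [Fintype S] (P : S → A → S → ℝ) (g : A → G) : ℝ :=
  ⨆ p : S × G, (1 - ∑ s', ⨅ a : {a : A // g a = p.2}, P p.1 a.1 s')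

/-- The optimal reward deviation factor `β_R^*(g)`. -/
noncomputable def betaRstar (R : S → A → ℝ) (g : A → G) : ℝ :=
  ⨆ q : {q : S × A × A // g q.2.1 = g q.2.2}, (R q.1.1 q.1.2.1 - R q.1.1 q.1.2.2)


open Matrix in
/-- The transition matrix `P^π` on state-action pairs. -/
noncomputable def Pmat [Fintype S] [Fintype A] (P : S → A → S → ℝ) (π : S → A → ℝ) :
    Matrix (S × A) (S × A) ℝ :=
  Matrix.of fun p q => P p.1 p.2 q.1 * π q.1 q.2

open Matrix


section AuxLemmas

lemma le_supNorm' {ι : Type*} [Finite ι] (f : ι → ℝ) (i : ι) : |f i| ≤ supNorm f :=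
  le_ciSup (f := fun i => |f i|) (Set.Finite.bddAbove (Set.finite_range _)) i

lemma supNorm_le' {ι : Type*} [Nonempty ι] {f : ι → ℝ} {c : ℝ} (h : ∀ i, |f i| ≤ c) :
    supNorm f ≤ c := ciSup_le h

lemma supNorm_nonneg' {ι : Type*} [Finite ι] [Nonempty ι] (f : ι → ℝ) : 0 ≤ supNorm f :=
  le_trans (abs_nonneg _) (le_supNorm' f (Classical.arbitrary ι))

lemma abs_weighted {ι : Type*} [Fintype ι] (w v : ι → ℝ) (hw : ∀ i, 0 ≤ w i)
    (hw1 : ∑ i, w i = 1) {c : ℝ} (h : ∀ i, |v i| ≤ c) : |∑ i, w i * v i| ≤ c := by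
  calc |∑ i, w i * v i| ≤ ∑ i, |w i * v i| := Finset.abs_sum_le_sum_abs _ _
    _ ≤ ∑ i, w i * c := by
        refine Finset.sum_le_sum fun i _ => ?_
        rw [abs_mul, abs_of_nonneg (hw i)]
        exact mul_le_mul_of_nonneg_left (h i) (hw i)
    _ = c := by rw [← Finset.sum_mul, hw1, one_mul]

variable {S A : Type*} [Fintype S] [Fintype A]

lemma mulVec_Pmat (P : S → A → S → ℝ) (π : S → A → ℝ) (x : S × A → ℝ) (p : S × A) :
    (Pmat P π *ᵥ x) p = ∑ s', P p.1 p.2 s' * ∑ a', π s' a' * x (s', a') := by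
  simp [Matrix.mulVec, Pmat, dotProduct, Fintype.sum_prod_type, Finset.mul_sum,
    mul_assoc]

lemma abs_mulVec_Pmat_le {P : S → A → S → ℝ} {π : S → A → ℝ}
    (hP : IsKernel P) (hπ : IsPolicy π) (x : S × A → ℝ) (p : S × A) :
    |(Pmat P π *ᵥ x) p| ≤ supNorm x := by
  rw [mulVec_Pmat]
  exact abs_weighted _ _ (fun s' => hP.nonneg _ _ s') (hP.sum_one _ _)
    (fun s' => abs_weighted _ _ (fun a' => hπ.nonneg _ _) (hπ.sum_one _)
      (fun a' => le_supNorm' x (s', a')))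

variable [Nonempty S] [Nonempty A] [DecidableEq S] [DecidableEq A]

lemma isUnit_B {P : S → A → S → ℝ} {π : S → A → ℝ} {γ : ℝ}
    (hP : IsKernel P) (hπ : IsPolicy π) (hγ0 : 0 ≤ γ) (hγ1 : γ < 1) :
    IsUnit (1 - γ • Pmat P π) := by
  rw [← Matrix.mulVec_injective_iff_isUnit]
  have key : ∀ z : S × A → ℝ, (1 - γ • Pmat P π) *ᵥ z = 0 → z = 0 := by
    intro z hz
    have hz' : z = γ • (Pmat P π *ᵥ z) := by
      rwa [Matrix.sub_mulVec, Matrix.one_mulVec, Matrix.smul_mulVec, sub_eq_zero] at hz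
    have h1 : supNorm z ≤ γ * supNorm z := by
      refine supNorm_le' fun i => ?_
      conv_lhs => rw [hz']
      rw [Pi.smul_apply, smul_eq_mul, abs_mul, abs_of_nonneg hγ0]
      exact mul_le_mul_of_nonneg_left (abs_mulVec_Pmat_le hP hπ z i) hγ0
    have hm : supNorm z ≤ 0 := by nlinarith
    funext i
    have h2 := le_supNorm' z i
    have h3 := abs_nonneg (z i)
    have : |z i| = 0 := le_antisymm (h2.trans hm) h3
    simpa using abs_eq_zero.mp this
  intro x y hxy
  have : (1 - γ • Pmat P π) *ᵥ (x - y) = 0 := by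
    rw [Matrix.mulVec_sub, hxy, sub_self]
  have := key _ this
  exact sub_eq_zero.mp this

lemma inv_mulVec_bound {P : S → A → S → ℝ} {π : S → A → ℝ} {γ : ℝ}
    (hP : IsKernel P) (hπ : IsPolicy π) (hγ0 : 0 ≤ γ) (hγ1 : γ < 1) (v : S × A → ℝ) :
    supNorm ((1 - γ • Pmat P π)⁻¹ *ᵥ v) ≤ supNorm v / (1 - γ) := by
  set B := 1 - γ • Pmat P π with hB
  have hud : IsUnit B.det := (Matrix.isUnit_iff_isUnit_det _).mp (isUnit_B hP hπ hγ0 hγ1)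
  set x := B⁻¹ *ᵥ v with hx
  have hBx : B *ᵥ x = v := by
    rw [hx, Matrix.mulVec_mulVec, Matrix.mul_nonsing_inv _ hud, Matrix.one_mulVec]
  have hxeq : ∀ i, x i = v i + γ * (Pmat P π *ᵥ x) i := by
    intro i
    have := congrFun hBx i
    rw [hB, Matrix.sub_mulVec, Matrix.one_mulVec, Matrix.smul_mulVec] at this
    simp only [Pi.sub_apply, Pi.smul_apply, smul_eq_mul] at this
    linarith
  have h1 : supNorm x ≤ supNorm v + γ * supNorm x := by
    refine supNorm_le' fun i => ?_
    rw [hxeq i]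
    calc |v i + γ * (Pmat P π *ᵥ x) i| ≤ |v i| + |γ * (Pmat P π *ᵥ x) i| := abs_add_le _ _
      _ ≤ supNorm v + γ * supNorm x := by
          refine add_le_add (le_supNorm' v i) ?_
          rw [abs_mul, abs_of_nonneg hγ0]
          exact mul_le_mul_of_nonneg_left (abs_mulVec_Pmat_le hP hπ x i) hγ0
  rw [le_div_iff₀ (by linarith)]
  nlinarith

lemma exists_bellman {P : S → A → S → ℝ} {π : S → A → ℝ} {γ : ℝ}
    (hP : IsKernel P) (hπ : IsPolicy π) (hγ0 : 0 ≤ γ) (hγ1 : γ < 1) (R : S → A → ℝ) :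
    ∃ Q : S → A → ℝ, IsBellman P R γ π Q := by
  set B := 1 - γ • Pmat P π with hB
  have hud : IsUnit B.det := (Matrix.isUnit_iff_isUnit_det _).mp (isUnit_B hP hπ hγ0 hγ1)
  set x : S × A → ℝ := B⁻¹ *ᵥ (fun p => R p.1 p.2) with hx
  refine ⟨fun s a => x (s, a), fun s a => ?_⟩
  have hBx : B *ᵥ x = fun p => R p.1 p.2 := by
    rw [hx, Matrix.mulVec_mulVec, Matrix.mul_nonsing_inv _ hud, Matrix.one_mulVec]
  have h2 := congrFun hBx (s, a)
  rw [hB, Matrix.sub_mulVec, Matrix.one_mulVec, Matrix.smul_mulVec] at h2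
  simp only [Pi.sub_apply, Pi.smul_apply, smul_eq_mul] at h2
  rw [mulVec_Pmat] at h2
  simp only at h2 ⊢
  linarith

lemma qpi_isBellman {P : S → A → S → ℝ} {π : S → A → ℝ} {γ : ℝ}
    (hP : IsKernel P) (hπ : IsPolicy π) (hγ0 : 0 ≤ γ) (hγ1 : γ < 1) (R : S → A → ℝ) :
    IsBellman P R γ π (Qpi P R γ π) := by
  have h := exists_bellman hP hπ hγ0 hγ1 R
  rw [Qpi, dif_pos h]
  exact h.choose_spec

lemma qpi_bound {P : S → A → S → ℝ} {π : S → A → ℝ} {γ : ℝ} {R : S → A → ℝ}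
    (hP : IsKernel P) (hπ : IsPolicy π) (hγ0 : 0 ≤ γ) (hγ1 : γ < 1)
    (hR : ∀ s a, 0 ≤ R s a ∧ R s a ≤ 1) :
    ∀ s a, |Qpi P R γ π s a| ≤ 1 / (1 - γ) := by
  have hB := qpi_isBellman hP hπ hγ0 hγ1 R
  set Q := Qpi P R γ π with hQ
  set m := supNorm (fun p : S × A => Q p.1 p.2) with hm
  have hmb : m ≤ 1 + γ * m := by
    refine supNorm_le' fun p => ?_
    rw [hB p.1 p.2]
    calc |R p.1 p.2 + γ * ∑ s', P p.1 p.2 s' * ∑ a', π s' a' * Q s' a'|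
        ≤ |R p.1 p.2| + |γ * ∑ s', P p.1 p.2 s' * ∑ a', π s' a' * Q s' a'| := abs_add_le _ _
      _ ≤ 1 + γ * m := by
          refine add_le_add ?_ ?_
          · rw [abs_of_nonneg (hR p.1 p.2).1]; exact (hR p.1 p.2).2
          · rw [abs_mul, abs_of_nonneg hγ0]
            refine mul_le_mul_of_nonneg_left ?_ hγ0
            exact abs_weighted _ _ (fun s' => hP.nonneg _ _ s') (hP.sum_one _ _)
              (fun s' => abs_weighted _ _ (fun a' => hπ.nonneg _ _) (hπ.sum_one _)
                (fun a' => le_supNorm' (fun p : S × A => Q p.1 p.2) (s', a')))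
  intro s a
  have h1 : |Q s a| ≤ m := le_supNorm' (fun p : S × A => Q p.1 p.2) (s, a)
  rw [le_div_iff₀ (by linarith : (0:ℝ) < 1 - γ)]
  nlinarith

lemma vpi_le_vstar {P : S → A → S → ℝ} {π : S → A → ℝ} {γ : ℝ} {R : S → A → ℝ}
    (hP : IsKernel P) (hπ : IsPolicy π) (hγ0 : 0 ≤ γ) (hγ1 : γ < 1)
    (hR : ∀ s a, 0 ≤ R s a ∧ R s a ≤ 1) (s : S) :
    Vpi P R γ π s ≤ Vstar P R γ s := by
  have hbdd : BddAbove (Set.range fun π' : {π' : S → A → ℝ // IsPolicy π'} =>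
      Vpi P R γ π'.1 s) := by
    refine ⟨1 / (1 - γ), ?_⟩
    rintro _ ⟨π', rfl⟩
    have := abs_weighted (π'.1 s) (fun a => Qpi P R γ π'.1 s a) (fun a => π'.2.nonneg s a)
      (π'.2.sum_one s) (fun a => qpi_bound hP π'.2 hγ0 hγ1 hR s a)
    calc Vpi P R γ π'.1 s ≤ |∑ a, π'.1 s a * Qpi P R γ π'.1 s a| := le_abs_self _
      _ ≤ 1 / (1 - γ) := this
  exact le_ciSup hbdd ⟨π, hπ⟩

end AuxLemmas

theorem statement_9 {S A : Type*} [Fintype S] [Fintype A] [Nonempty S] [Nonempty A]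
    [DecidableEq S] [DecidableEq A]
    (P Phat : S → A → S → ℝ) (R : S → A → ℝ) (γ : ℝ)
    (hP : IsKernel P) (hPhat : IsKernel Phat) (hR : ∀ s a, 0 ≤ R s a ∧ R s a ≤ 1)
    (hγ0 : 0 ≤ γ) (hγ1 : γ < 1)
    (π : S → A → ℝ) (hπ : IsPolicy π) (εopt : ℝ)
    (hεopt : supNorm (fun s => Vstar Phat R γ s - Vpi Phat R γ π s) ≤ εopt) :
    supNorm (fun p : S × A => Qpi Phat R γ π p.1 p.2 - Qpi P R γ π p.1 p.2)
      ≤ γ * supNorm ((1 - γ • Pmat P π)⁻¹ *ᵥ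
            (fun p : S × A => ∑ s', (Phat p.1 p.2 s' - P p.1 p.2 s') * Vstar Phat R γ s'))
        + γ * εopt / (1 - γ) := by
  have hε0 : 0 ≤ εopt := le_trans (supNorm_nonneg' _) hεopt
  have hγpos : (0:ℝ) < 1 - γ := by linarith
  have hBQ := qpi_isBellman hP hπ hγ0 hγ1 R
  have hBQh := qpi_isBellman hPhat hπ hγ0 hγ1 R
  set Q := Qpi P R γ π with hQdef
  set Qh := Qpi Phat R γ π with hQhdef
  set Vst := Vstar Phat R γ with hVstdef
  set d : S × A → ℝ := fun p => Qh p.1 p.2 - Q p.1 p.2 with hd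
  set Vh : S → ℝ := fun s => ∑ a, π s a * Qh s a with hVh
  set w : S × A → ℝ :=
    fun p => ∑ s', (Phat p.1 p.2 s' - P p.1 p.2 s') * Vst s' with hw
  set e : S × A → ℝ :=
    fun p => ∑ s', (Phat p.1 p.2 s' - P p.1 p.2 s') * (Vst s' - Vh s') with he
  set u : S × A → ℝ :=
    fun p => ∑ s', (Phat p.1 p.2 s' - P p.1 p.2 s') * Vh s' with hu
  set B := 1 - γ • Pmat P π with hB
  have hud : IsUnit B.det := by
    rw [hB]
    exact (Matrix.isUnit_iff_isUnit_det _).mp (isUnit_B hP hπ hγ0 hγ1)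
  have hBd : B *ᵥ d = γ • u := by
    funext p
    obtain ⟨s, a⟩ := p
    rw [hB, Matrix.sub_mulVec, Matrix.one_mulVec, Matrix.smul_mulVec]
    simp only [Pi.sub_apply, Pi.smul_apply, smul_eq_mul]
    rw [mulVec_Pmat]
    have e1 := hBQ s a
    have e2 := hBQh s a
    have split1 : ∑ s', P (s, a).1 (s, a).2 s' * ∑ a', π s' a' * d (s', a')
        = (∑ s', P s a s' * ∑ a', π s' a' * Qh s' a')
          - ∑ s', P s a s' * ∑ a', π s' a' * Q s' a' := by
      rw [← Finset.sum_sub_distrib]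
      refine Finset.sum_congr rfl fun s' _ => ?_
      rw [← mul_sub, ← Finset.sum_sub_distrib]
      congr 1
      refine Finset.sum_congr rfl fun a' _ => ?_
      simp only [hd]
      ring
    have split2 : u (s, a)
        = (∑ s', Phat s a s' * ∑ a', π s' a' * Qh s' a')
          - ∑ s', P s a s' * ∑ a', π s' a' * Qh s' a' := by
      simp only [hu, hVh, sub_mul, Finset.sum_sub_distrib]
    have hds : d (s, a) = Qh s a - Q s a := rfl
    rw [split1, hds, split2, e2, e1]
    ring
  have hdeq : d = γ • (B⁻¹ *ᵥ u) := by
    have h := congrArg (fun v => B⁻¹ *ᵥ v) hBd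
    rw [Matrix.mulVec_mulVec, Matrix.nonsing_inv_mul _ hud, Matrix.one_mulVec,
      Matrix.mulVec_smul] at h
    exact h
  have hVle : ∀ s', Vh s' ≤ Vst s' := fun s' => vpi_le_vstar hPhat hπ hγ0 hγ1 hR s'
  have hVub : ∀ s', Vst s' - Vh s' ≤ εopt := fun s' =>
    le_trans (le_trans (le_abs_self _)
      (le_supNorm' (fun s => Vstar Phat R γ s - Vpi Phat R γ π s) s')) hεopt
  have heb : ∀ p, |e p| ≤ εopt := by
    intro p
    have hsplit : e p = (∑ s', Phat p.1 p.2 s' * (Vst s' - Vh s'))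
        - ∑ s', P p.1 p.2 s' * (Vst s' - Vh s') := by
      simp only [he, sub_mul, Finset.sum_sub_distrib]
    have h1 : 0 ≤ ∑ s', Phat p.1 p.2 s' * (Vst s' - Vh s') :=
      Finset.sum_nonneg fun s' _ =>
        mul_nonneg (hPhat.nonneg _ _ _) (by linarith [hVle s'])
    have h2 : ∑ s', Phat p.1 p.2 s' * (Vst s' - Vh s') ≤ εopt := by
      calc ∑ s', Phat p.1 p.2 s' * (Vst s' - Vh s')
          ≤ ∑ s', Phat p.1 p.2 s' * εopt :=
            Finset.sum_le_sum fun s' _ =>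
              mul_le_mul_of_nonneg_left (hVub s') (hPhat.nonneg _ _ _)
        _ = εopt := by rw [← Finset.sum_mul, hPhat.sum_one, one_mul]
    have h3 : 0 ≤ ∑ s', P p.1 p.2 s' * (Vst s' - Vh s') :=
      Finset.sum_nonneg fun s' _ =>
        mul_nonneg (hP.nonneg _ _ _) (by linarith [hVle s'])
    have h4 : ∑ s', P p.1 p.2 s' * (Vst s' - Vh s') ≤ εopt := by
      calc ∑ s', P p.1 p.2 s' * (Vst s' - Vh s')
          ≤ ∑ s', P p.1 p.2 s' * εopt :=
            Finset.sum_le_sum fun s' _ =>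
              mul_le_mul_of_nonneg_left (hVub s') (hP.nonneg _ _ _)
        _ = εopt := by rw [← Finset.sum_mul, hP.sum_one, one_mul]
    rw [hsplit, abs_le]
    constructor <;> linarith
  have hue : u = w - e := by
    funext p
    simp only [hu, hw, he, Pi.sub_apply, ← Finset.sum_sub_distrib]
    refine Finset.sum_congr rfl fun s' _ => ?_
    ring
  have hinv_e : supNorm (B⁻¹ *ᵥ e) ≤ εopt / (1 - γ) :=
    le_trans (inv_mulVec_bound hP hπ hγ0 hγ1 e)
      ((div_le_div_iff_of_pos_right hγpos).mpr (supNorm_le' heb))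
  refine supNorm_le' fun p => ?_
  have hdp : d p = γ * ((B⁻¹ *ᵥ u) p) := by rw [hdeq]; simp
  calc |d p| = γ * |(B⁻¹ *ᵥ u) p| := by rw [hdp, abs_mul, abs_of_nonneg hγ0]
    _ ≤ γ * (|(B⁻¹ *ᵥ w) p| + |(B⁻¹ *ᵥ e) p|) := by
        refine mul_le_mul_of_nonneg_left ?_ hγ0
        have hsplit : (B⁻¹ *ᵥ u) p = (B⁻¹ *ᵥ w) p - (B⁻¹ *ᵥ e) p := by
          rw [hue, Matrix.mulVec_sub]; rfl
        rw [hsplit, sub_eq_add_neg]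
        exact le_trans (abs_add_le _ _) (by rw [abs_neg])
    _ ≤ γ * (supNorm (B⁻¹ *ᵥ w) + εopt / (1 - γ)) := by
        refine mul_le_mul_of_nonneg_left
          (add_le_add (le_supNorm' _ p) (le_trans (le_supNorm' _ p) hinv_e)) hγ0
    _ = γ * supNorm (B⁻¹ *ᵥ w) + γ * εopt / (1 - γ) := by ring

end MDPGroup
end

section
/- Let M = (S, A, P, R, γ) be a finite discounted MDP with rewards in [0,1], g : A → G a grouping function, π^i a lower-level policy, and M_G the associated grouped MDP. Then for every higher-level policy π^o and every state s, V_M^{π^o∘π^i}(s) = V_{M_G}^{π^o}(s). -/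
/-!
For `γ < 1` the Bellman operator of a policy is a `γ`-contraction in the sup norm, so `Q^π` is
its unique fixed point. Since `π^i(·|h)` lives on `A_h`, summing over actions under
`π^o ∘ π^i` is summing over groups under `π^o` and then over actions under `π^i`. Averaging the
Bellman equation of `Q = Q_M^{π^o∘π^i}` against `π^i(·|h)` therefore shows that
`Q_G(s, h) = ∑_a π^i(a|h) Q(s, a)` solves the Bellman equation of `π^o` in `M_G`, so
`Q_G = Q_{M_G}^{π^o}`, and the same regrouping identifies the two state values.
-/

open scoped BigOperators Classical

namespace MDPGroup

variable {S A G : Type*}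

theorem abs_sum_mul_le_of_sum_eq_one {ι : Type*} [Fintype ι] {w f : ι → ℝ} {c : ℝ}
    (hw : ∀ i, 0 ≤ w i) (hw1 : ∑ i, w i = 1) (hf : ∀ i, |f i| ≤ c) :
    |∑ i, w i * f i| ≤ c :=
  calc |∑ i, w i * f i| ≤ ∑ i, w i * |f i| := by
        simpa only [abs_mul, abs_of_nonneg (hw _)] using
          Finset.abs_sum_le_sum_abs (fun i => w i * f i) Finset.univ
    _ ≤ ∑ i, w i * c := Finset.sum_le_sum fun i _ => mul_le_mul_of_nonneg_left (hf i) (hw i)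
    _ = c := by rw [← Finset.sum_mul, hw1, one_mul]

def bellmanOp [Fintype S] [Fintype A] (P : S → A → S → ℝ) (R : S → A → ℝ) (γ : ℝ)
    (π : S → A → ℝ) (Q : S → A → ℝ) : S → A → ℝ :=
  fun s a => R s a + γ * ∑ s', P s a s' * ∑ a', π s' a' * Q s' a'

section Bellman

variable [Fintype S] [Fintype A] {P : S → A → S → ℝ} {R : S → A → ℝ} {γ : ℝ}
  {π : S → A → ℝ}

theorem isBellman_iff_isFixedPt {Q : S → A → ℝ} :
    IsBellman P R γ π Q ↔ Function.IsFixedPt (bellmanOp P R γ π) Q := by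
  simp only [IsBellman, Function.IsFixedPt, funext_iff, bellmanOp, eq_comm]

theorem dist_bellmanOp_le (hP : IsKernel P) (hπ : IsPolicy π) (hγ0 : 0 ≤ γ)
    (Q₁ Q₂ : S → A → ℝ) :
    dist (bellmanOp P R γ π Q₁) (bellmanOp P R γ π Q₂) ≤ γ * dist Q₁ Q₂ := by
  have hQ : ∀ s a, |Q₁ s a - Q₂ s a| ≤ dist Q₁ Q₂ := fun s a =>
    (dist_le_pi_dist _ _ a).trans (dist_le_pi_dist Q₁ Q₂ s)
  refine (dist_pi_le_iff (by positivity)).2 fun s => (dist_pi_le_iff (by positivity)).2 fun a => ?_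
  have hdiff : bellmanOp P R γ π Q₁ s a - bellmanOp P R γ π Q₂ s a =
      γ * ∑ s', P s a s' * ∑ a', π s' a' * (Q₁ s' a' - Q₂ s' a') := by
    simp only [bellmanOp, mul_sub, Finset.sum_sub_distrib]
    ring
  rw [Real.dist_eq, hdiff, abs_mul, abs_of_nonneg hγ0]
  gcongr
  exact abs_sum_mul_le_of_sum_eq_one (hP.nonneg s a) (hP.sum_one s a) fun s' =>
    abs_sum_mul_le_of_sum_eq_one (hπ.nonneg s') (hπ.sum_one s') (hQ s')

theorem contractingWith_bellmanOp (hP : IsKernel P) (hπ : IsPolicy π) (hγ0 : 0 ≤ γ)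
    (hγ1 : γ < 1) : ContractingWith ⟨γ, hγ0⟩ (bellmanOp P R γ π) :=
  ⟨by exact_mod_cast hγ1, .of_dist_le_mul (dist_bellmanOp_le hP hπ hγ0)⟩

theorem Qpi_eq_of_isBellman (hP : IsKernel P) (hπ : IsPolicy π) (hγ0 : 0 ≤ γ) (hγ1 : γ < 1)
    {Q : S → A → ℝ} (hQ : IsBellman P R γ π Q) : Qpi P R γ π = Q := by
  have hex : ∃ Q, IsBellman P R γ π Q := ⟨Q, hQ⟩
  rw [Qpi, dif_pos hex]
  exact (contractingWith_bellmanOp hP hπ hγ0 hγ1).fixedPoint_unique'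
    (isBellman_iff_isFixedPt.1 hex.choose_spec) (isBellman_iff_isFixedPt.1 hQ)

theorem isBellman_Qpi (hP : IsKernel P) (hπ : IsPolicy π) (hγ0 : 0 ≤ γ) (hγ1 : γ < 1) :
    IsBellman P R γ π (Qpi P R γ π) := by
  have hf := contractingWith_bellmanOp (R := R) hP hπ hγ0 hγ1
  have hQ := isBellman_iff_isFixedPt.2 hf.fixedPoint_isFixedPt
  rwa [Qpi_eq_of_isBellman hP hπ hγ0 hγ1 hQ]

end Bellman

section Grouping

variable {g : A → G} {πi : G → A → ℝ}

theorem sum_compose_mul [Fintype A] [Fintype G] (hπi : IsLower g πi) (πo : S → G → ℝ) (s : S)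
    (f : A → ℝ) :
    ∑ a, compose g πi πo s a * f a = ∑ h, πo s h * ∑ a, πi h a * f a := by
  simp only [Finset.mul_sum]
  rw [Finset.sum_comm]
  refine Finset.sum_congr rfl fun a _ => ?_
  rw [Finset.sum_eq_single (g a) (fun h _ hne => ?_) (by simp)]
  · simp only [compose, mul_assoc]
  · rw [hπi.support h a (Ne.symm hne), zero_mul, mul_zero]

theorem IsPolicy.compose [Fintype A] [Fintype G] (hπi : IsLower g πi) {πo : S → G → ℝ}
    (hπo : IsPolicy πo) :
    IsPolicy (compose g πi πo) where
  nonneg s a := mul_nonneg (hπo.nonneg _ _) (hπi.nonneg _ _)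
  sum_one s := by
    simpa only [mul_one, hπi.sum_one, hπo.sum_one] using sum_compose_mul hπi πo s fun _ => 1

theorem IsKernel.PG [Fintype S] [Fintype A] {P : S → A → S → ℝ} (hP : IsKernel P)
    (hπi : IsLower g πi) :
    IsKernel (PG P πi) where
  nonneg s h s' := Finset.sum_nonneg fun a _ => mul_nonneg (hπi.nonneg _ _) (hP.nonneg _ _ _)
  sum_one s h := by
    simp only [MDPGroup.PG]
    rw [Finset.sum_comm]
    simp only [← Finset.mul_sum, hP.sum_one, mul_one, hπi.sum_one]

theorem sum_mul_bellman_eq [Fintype S] [Fintype A] {P : S → A → S → ℝ} {R : S → A → ℝ}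
    {γ : ℝ} (W : S → ℝ) (s : S) (h : G) :
    ∑ a, πi h a * (R s a + γ * ∑ s', P s a s' * W s') =
      RG R πi s h + γ * ∑ s', PG P πi s h s' * W s' := by
  simp only [RG, PG, mul_add, Finset.sum_add_distrib, Finset.mul_sum, Finset.sum_mul]
  rw [Finset.sum_comm (s := Finset.univ (α := A))]
  congr 1
  exact Finset.sum_congr rfl fun _ _ => Finset.sum_congr rfl fun _ _ => by ring

theorem isBellman_grouped [Fintype S] [Fintype A] [Fintype G] {P : S → A → S → ℝ}
    {R : S → A → ℝ} {γ : ℝ} {πo : S → G → ℝ} {Q : S → A → ℝ} (hπi : IsLower g πi)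
    (hQ : IsBellman P R γ (compose g πi πo) Q) :
    IsBellman (PG P πi) (RG R πi) γ πo fun s h => ∑ a, πi h a * Q s a := by
  intro s h
  beta_reduce
  rw [Finset.sum_congr rfl fun a _ => congrArg (πi h a * ·) (hQ s a), sum_mul_bellman_eq]
  simp only [sum_compose_mul hπi]

end Grouping

theorem statement_14_general {S A G : Type*} [Fintype S] [Fintype A] [Fintype G]
    (P : S → A → S → ℝ) (R : S → A → ℝ) (γ : ℝ)
    (hP : IsKernel P)
    (hγ0 : 0 ≤ γ) (hγ1 : γ < 1)
    (g : A → G)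
    (πi : G → A → ℝ) (hπi : IsLower g πi)
    (πo : S → G → ℝ) (hπo : IsPolicy πo) :
    ∀ s, Vpi P R γ (compose g πi πo) s = Vpi (PG P πi) (RG R πi) γ πo s := by
  intro s
  have hQ := isBellman_Qpi (R := R) hP (hπo.compose hπi) hγ0 hγ1
  rw [Vpi, Vpi, Qpi_eq_of_isBellman (hP.PG hπi) hπo hγ0 hγ1 (isBellman_grouped hπi hQ)]
  exact sum_compose_mul hπi πo s _

theorem statement_14 {S A G : Type*} [Fintype S] [Fintype A] [Fintype G]
    [Nonempty S] [Nonempty A]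
    (P : S → A → S → ℝ) (R : S → A → ℝ) (γ : ℝ)
    (hP : IsKernel P) (hR : ∀ s a, 0 ≤ R s a ∧ R s a ≤ 1)
    (hγ0 : 0 ≤ γ) (hγ1 : γ < 1)
    (g : A → G) (hg : Function.Surjective g)
    (πi : G → A → ℝ) (hπi : IsLower g πi)
    (πo : S → G → ℝ) (hπo : IsPolicy πo) :
    ∀ s, Vpi P R γ (compose g πi πo) s = Vpi (PG P πi) (RG R πi) γ πo s :=
  statement_14_general P R γ hP hγ0 hγ1 g πi hπi πo hπo

end MDPGroup
end
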